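/- arXiv:math/0106197 — 3 statements merged into one kernel-verified Lean document; each statement's English description precedes it below -/
import Mathlib

section
/- Let M be a connected complex manifold on which a group G acts transitively by biholomorphisms, and let μ be a G-invariant volume element on M such that the Ricci tensor g = Ric(μ) is positive definite (hence a Riemannian metric). Then g equals its own Ricci tensor, i.e., g is an Einstein metric with Einstein constant 1. -/
open Complex

/-- The Wirtinger derivative `∂F/∂zᵢ` of a function `F : ℂⁿ → ℂ` (real-differentiable). -/
noncomputable def wirtingerD {n : ℕ} (F : (Fin n → ℂ) → ℂ) (z : Fin n → ℂ) (i : Fin n) : ℂ :=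
  (1 / 2) * (fderiv ℝ F z (Pi.single i 1) - Complex.I * fderiv ℝ F z (Pi.single i Complex.I))

/-- The conjugate Wirtinger derivative `∂F/∂z̄ⱼ`. -/
noncomputable def wirtingerDBar {n : ℕ} (F : (Fin n → ℂ) → ℂ) (z : Fin n → ℂ) (j : Fin n) : ℂ :=
  (1 / 2) * (fderiv ℝ F z (Pi.single j 1) + Complex.I * fderiv ℝ F z (Pi.single j Complex.I))

/-- The Ricci tensor `Ric(μ)ᵢⱼ = ∂²(log k)/∂zᵢ∂z̄ⱼ` of the volume element
`μ = k·(i/2)ⁿ dz₁∧dz̄₁∧⋯∧dzₙ∧dz̄ₙ` with density `k`. -/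
noncomputable def ricciOfDensity {n : ℕ} (k : (Fin n → ℂ) → ℝ) (z : Fin n → ℂ)
    (i j : Fin n) : ℂ :=
  wirtingerD (fun w => wirtingerDBar (fun u => (Real.log (k u) : ℂ)) w j) z i

/-- The holomorphic Jacobian determinant of a map `φ : ℂⁿ → ℂⁿ`. -/
noncomputable def holJacDet {n : ℕ} (φ : (Fin n → ℂ) → (Fin n → ℂ)) (z : Fin n → ℂ) : ℂ :=
  Matrix.det (Matrix.of fun i j => wirtingerD (fun w => φ w i) z j)

namespace Stmt10Aux

variable {n : ℕ}

/-- congruence -/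
theorem wD_congr {F G : (Fin n → ℂ) → ℂ} {z : Fin n → ℂ} (h : F =ᶠ[nhds z] G) (i : Fin n) :
    wirtingerD F z i = wirtingerD G z i := by
  unfold wirtingerD; rw [h.fderiv_eq]

theorem wDBar_congr {F G : (Fin n → ℂ) → ℂ} {z : Fin n → ℂ} (h : F =ᶠ[nhds z] G) (j : Fin n) :
    wirtingerDBar F z j = wirtingerDBar G z j := by
  unfold wirtingerDBar; rw [h.fderiv_eq]

theorem single_I {i : Fin n} : (Pi.single i Complex.I : Fin n → ℂ) = Complex.I • (Pi.single i 1 : Fin n → ℂ) := by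
  funext b
  by_cases hb : b = i
  · subst hb; simp
  · simp [Pi.single_apply, hb]

/-- holomorphic: dbar vanishes -/
theorem wDBar_of_holo {F : (Fin n → ℂ) → ℂ} {z : Fin n → ℂ} (h : DifferentiableAt ℂ F z)
    (j : Fin n) : wirtingerDBar F z j = 0 := by
  unfold wirtingerDBar
  rw [h.fderiv_restrictScalars ℝ]
  simp only [ContinuousLinearMap.coe_restrictScalars']
  rw [single_I, (fderiv ℂ F z).map_smul]
  simp only [smul_eq_mul]
  ring_nf
  simp [Complex.I_sq]

theorem wD_of_holo {F : (Fin n → ℂ) → ℂ} {z : Fin n → ℂ} (h : DifferentiableAt ℂ F z)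
    (i : Fin n) : wirtingerD F z i = fderiv ℂ F z (Pi.single i 1) := by
  unfold wirtingerD
  rw [h.fderiv_restrictScalars ℝ]
  simp only [ContinuousLinearMap.coe_restrictScalars']
  rw [single_I, (fderiv ℂ F z).map_smul]
  simp only [smul_eq_mul]
  ring_nf
  simp [Complex.I_sq]
  ring

variable {F G : (Fin n → ℂ) → ℂ} {z : Fin n → ℂ}

theorem wD_add (hF : DifferentiableAt ℝ F z) (hG : DifferentiableAt ℝ G z) (i : Fin n) :
    wirtingerD (fun w => F w + G w) z i = wirtingerD F z i + wirtingerD G z i := by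
  unfold wirtingerD; rw [fderiv_fun_add hF hG]
  simp only [ContinuousLinearMap.add_apply]; ring

theorem wDBar_add (hF : DifferentiableAt ℝ F z) (hG : DifferentiableAt ℝ G z) (i : Fin n) :
    wirtingerDBar (fun w => F w + G w) z i = wirtingerDBar F z i + wirtingerDBar G z i := by
  unfold wirtingerDBar; rw [fderiv_fun_add hF hG]
  simp only [ContinuousLinearMap.add_apply]; ring

theorem wDBar_const_add (c : ℂ) (i : Fin n) :
    wirtingerDBar (fun w => c + F w) z i = wirtingerDBar F z i := by
  unfold wirtingerDBar; rw [fderiv_const_add]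

theorem wD_sum {ι : Type*} (s : Finset ι) (A : ι → (Fin n → ℂ) → ℂ)
    (h : ∀ b ∈ s, DifferentiableAt ℝ (A b) z) (i : Fin n) :
    wirtingerD (fun w => ∑ b ∈ s, A b w) z i = ∑ b ∈ s, wirtingerD (A b) z i := by
  unfold wirtingerD; rw [fderiv_fun_sum h]
  simp only [ContinuousLinearMap.sum_apply, Finset.mul_sum, ← Finset.sum_sub_distrib]

theorem wD_mul (hF : DifferentiableAt ℝ F z) (hG : DifferentiableAt ℝ G z) (i : Fin n) :
    wirtingerD (fun w => F w * G w) z i = wirtingerD F z i * G z + F z * wirtingerD G z i := by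
  unfold wirtingerD; rw [fderiv_fun_mul hF hG]
  simp only [ContinuousLinearMap.add_apply, ContinuousLinearMap.smul_apply, smul_eq_mul]; ring

theorem wDBar_mul (hF : DifferentiableAt ℝ F z) (hG : DifferentiableAt ℝ G z) (i : Fin n) :
    wirtingerDBar (fun w => F w * G w) z i
      = wirtingerDBar F z i * G z + F z * wirtingerDBar G z i := by
  unfold wirtingerDBar; rw [fderiv_fun_mul hF hG]
  simp only [ContinuousLinearMap.add_apply, ContinuousLinearMap.smul_apply, smul_eq_mul]; ring

theorem fderiv_conj (hF : DifferentiableAt ℝ F z) :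
    fderiv ℝ (fun w => (starRingEnd ℂ) (F w)) z
      = (Complex.conjCLE.toContinuousLinearMap).comp (fderiv ℝ F z) := by
  have h1 : HasFDerivAt (fun w => (starRingEnd ℂ) (F w))
      ((Complex.conjCLE.toContinuousLinearMap).comp (fderiv ℝ F z)) z := by
    exact (Complex.conjCLE.toContinuousLinearMap.hasFDerivAt).comp z hF.hasFDerivAt
  exact h1.fderiv

theorem wD_conj (hF : DifferentiableAt ℝ F z) (i : Fin n) :
    wirtingerD (fun w => (starRingEnd ℂ) (F w)) z i = (starRingEnd ℂ) (wirtingerDBar F z i) := by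
  unfold wirtingerD wirtingerDBar
  rw [fderiv_conj hF]
  simp only [ContinuousLinearMap.coe_comp', Function.comp_apply,
    ContinuousLinearEquiv.coe_coe, Complex.conjCLE_apply, map_add, map_mul, map_div₀, map_one,
    map_ofNat, Complex.conj_I]
  ring

theorem wDBar_conj (hF : DifferentiableAt ℝ F z) (i : Fin n) :
    wirtingerDBar (fun w => (starRingEnd ℂ) (F w)) z i = (starRingEnd ℂ) (wirtingerD F z i) := by
  unfold wirtingerD wirtingerDBar
  rw [fderiv_conj hF]
  simp only [ContinuousLinearMap.coe_comp', Function.comp_apply,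
    ContinuousLinearEquiv.coe_coe, Complex.conjCLE_apply, map_sub, map_mul, map_div₀, map_one,
    map_ofNat, Complex.conj_I]
  ring

theorem wDBar_log {u : (Fin n → ℂ) → ℝ} (hu : DifferentiableAt ℝ u z) (hne : u z ≠ 0)
    (j : Fin n) :
    wirtingerDBar (fun w => (Real.log (u w) : ℂ)) z j
      = (↑(u z))⁻¹ * wirtingerDBar (fun w => ((u w : ℂ))) z j := by
  have h1 : HasFDerivAt (fun w => Real.log (u w)) ((u z)⁻¹ • fderiv ℝ u z) z :=
    (Real.hasDerivAt_log hne).comp_hasFDerivAt z hu.hasFDerivAt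
  have h2 : HasFDerivAt (fun w => (Real.log (u w) : ℂ))
      (Complex.ofRealCLM.comp ((u z)⁻¹ • fderiv ℝ u z)) z :=
    Complex.ofRealCLM.hasFDerivAt.comp z h1
  have h3 : HasFDerivAt (fun w => ((u w : ℂ))) (Complex.ofRealCLM.comp (fderiv ℝ u z)) z :=
    Complex.ofRealCLM.hasFDerivAt.comp z hu.hasFDerivAt
  unfold wirtingerDBar
  rw [h2.fderiv, h3.fderiv]
  simp only [ContinuousLinearMap.coe_comp', Function.comp_apply,
    ContinuousLinearMap.coe_smul', Pi.smul_apply, smul_eq_mul, Complex.ofRealCLM_apply,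
    Complex.ofReal_mul, Complex.ofReal_inv]
  ring

theorem single_decomp (a : Fin n) (c : ℂ) :
    (Pi.single a c : Fin n → ℂ)
      = c.re • (Pi.single a 1 : Fin n → ℂ) + c.im • (Pi.single a Complex.I : Fin n → ℂ) := by
  funext b
  by_cases hb : b = a
  · subst hb
    simp [Complex.real_smul, Complex.re_add_im]
  · simp [Pi.single_apply, hb]

theorem clm_expand (T : (Fin n → ℂ) →L[ℝ] ℂ) (v : Fin n → ℂ) :
    T v = ∑ a, (((v a).re : ℂ) * T (Pi.single a 1) + ((v a).im : ℂ) * T (Pi.single a Complex.I)) := by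
  conv_lhs => rw [← Finset.univ_sum_single v]
  rw [map_sum]
  refine Finset.sum_congr rfl fun a _ => ?_
  rw [single_decomp a (v a), map_add, map_smul, map_smul, Complex.real_smul, Complex.real_smul]

theorem fderiv_real_comp_holo {φ : (Fin n → ℂ) → (Fin n → ℂ)}
    (hF : DifferentiableAt ℝ F (φ z)) (hφ : DifferentiableAt ℂ φ z) :
    fderiv ℝ (fun w => F (φ w)) z
      = (fderiv ℝ F (φ z)).comp ((fderiv ℂ φ z).restrictScalars ℝ) := by
  rw [← hφ.fderiv_restrictScalars ℝ]
  exact fderiv_comp z hF (hφ.restrictScalars ℝ)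

theorem wD_comp {φ : (Fin n → ℂ) → (Fin n → ℂ)}
    (hF : DifferentiableAt ℝ F (φ z)) (hφ : DifferentiableAt ℂ φ z) (i : Fin n) :
    wirtingerD (fun w => F (φ w)) z i
      = ∑ a, (fderiv ℂ φ z (Pi.single i 1)) a * wirtingerD F (φ z) a := by
  have hc := fderiv_real_comp_holo hF hφ
  set T := fderiv ℝ F (φ z) with hT
  set V := fderiv ℂ φ z (Pi.single i 1) with hV
  have e1 : fderiv ℝ (fun w => F (φ w)) z (Pi.single i 1) = T V := by rw [hc]; rfl
  have e2 : fderiv ℝ (fun w => F (φ w)) z (Pi.single i Complex.I) = T (Complex.I • V) := by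
    rw [hc]
    simp only [ContinuousLinearMap.coe_comp', Function.comp_apply,
      ContinuousLinearMap.coe_restrictScalars']
    rw [single_I, (fderiv ℂ φ z).map_smul]
  unfold wirtingerD
  rw [e1, e2, clm_expand T V, clm_expand T (Complex.I • V)]
  simp only [Pi.smul_apply, smul_eq_mul, Finset.mul_sum, ← Finset.sum_sub_distrib]
  refine Finset.sum_congr rfl fun a _ => ?_
  obtain ⟨r, s, hrs⟩ : ∃ r s : ℝ, V a = ↑r + ↑s * Complex.I :=
    ⟨_, _, (Complex.re_add_im (V a)).symm⟩
  rw [hrs]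
  simp only [Complex.add_re, Complex.add_im, Complex.ofReal_re, Complex.ofReal_im,
    Complex.mul_I_re, Complex.mul_I_im, Complex.mul_re, Complex.mul_im,
    Complex.I_re, Complex.I_im]
  push_cast
  linear_combination ((s : ℂ) * T (Pi.single a Complex.I) / 2) * Complex.I_sq

theorem wDBar_comp {φ : (Fin n → ℂ) → (Fin n → ℂ)}
    (hF : DifferentiableAt ℝ F (φ z)) (hφ : DifferentiableAt ℂ φ z) (j : Fin n) :
    wirtingerDBar (fun w => F (φ w)) z j
      = ∑ a, (starRingEnd ℂ) ((fderiv ℂ φ z (Pi.single j 1)) a) * wirtingerDBar F (φ z) a := by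
  have hc := fderiv_real_comp_holo hF hφ
  set T := fderiv ℝ F (φ z) with hT
  set V := fderiv ℂ φ z (Pi.single j 1) with hV
  have e1 : fderiv ℝ (fun w => F (φ w)) z (Pi.single j 1) = T V := by rw [hc]; rfl
  have e2 : fderiv ℝ (fun w => F (φ w)) z (Pi.single j Complex.I) = T (Complex.I • V) := by
    rw [hc]
    simp only [ContinuousLinearMap.coe_comp', Function.comp_apply,
      ContinuousLinearMap.coe_restrictScalars']
    rw [single_I, (fderiv ℂ φ z).map_smul]
  unfold wirtingerDBar
  rw [e1, e2, clm_expand T V, clm_expand T (Complex.I • V)]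
  simp only [Pi.smul_apply, smul_eq_mul, Finset.mul_sum, ← Finset.sum_add_distrib]
  refine Finset.sum_congr rfl fun a _ => ?_
  obtain ⟨r, s, hrs⟩ : ∃ r s : ℝ, V a = ↑r + ↑s * Complex.I :=
    ⟨_, _, (Complex.re_add_im (V a)).symm⟩
  rw [hrs]
  simp only [Complex.add_re, Complex.add_im, Complex.ofReal_re, Complex.ofReal_im,
    Complex.mul_I_re, Complex.mul_I_im, Complex.mul_re, Complex.mul_im,
    Complex.I_re, Complex.I_im, map_add, map_mul, Complex.conj_ofReal, Complex.conj_I]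
  push_cast
  linear_combination ((s : ℂ) * T (Pi.single a Complex.I) / 2) * Complex.I_sq

theorem hasDerivAt_line {f : (Fin n → ℂ) → ℂ} {w v : Fin n → ℂ} (h1 : DifferentiableAt ℂ f w) :
    HasDerivAt (fun t : ℂ => f (w + t • v)) (fderiv ℂ f w v) 0 := by
  have h2 : HasDerivAt (fun t : ℂ => w + t • v) v 0 := by
    simpa using ((hasDerivAt_id (0 : ℂ)).smul_const v).const_add w
  have h1' : HasFDerivAt f (fderiv ℂ f w) (w + (0 : ℂ) • v) := by
    rw [zero_smul, add_zero]; exact h1.hasFDerivAt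
  exact h1'.comp_hasDerivAt 0 h2

open MeasureTheory in
theorem norm_fderiv_le {f : (Fin n → ℂ) → ℂ} {U : Set (Fin n → ℂ)} (hU : IsOpen U)
    (hf : DifferentiableOn ℂ f U) {z₀ : Fin n → ℂ} {ε M : ℝ} (hε : 0 < ε)
    (hB : Metric.closedBall z₀ (2 * ε) ⊆ U)
    (hM : ∀ p ∈ Metric.closedBall z₀ (2 * ε), ‖f p‖ ≤ M) :
    ∀ w ∈ Metric.closedBall z₀ ε, ‖fderiv ℂ f w‖ ≤ 2 * M / ε := by
  intro w hw
  have hM0 : 0 ≤ M := le_trans (norm_nonneg _) (hM z₀ (Metric.mem_closedBall_self (by positivity)))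
  refine ContinuousLinearMap.opNorm_le_bound _ (by positivity) fun v => ?_
  by_cases hv : v = 0
  · simp [hv]
  have hvn : 0 < ‖v‖ := norm_pos_iff.2 hv
  set R : ℝ := ε / ‖v‖ with hRdef
  have hR : 0 < R := div_pos hε hvn
  have hmem : ∀ t : ℂ, t ∈ Metric.closedBall (0 : ℂ) R → w + t • v ∈ Metric.closedBall z₀ (2 * ε) := by
    intro t ht
    rw [Metric.mem_closedBall] at ht hw ⊢
    have h1 : dist (w + t • v) z₀ ≤ dist w z₀ + ‖t • v‖ := by
      rw [dist_eq_norm, dist_eq_norm] at *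
      calc ‖w + t • v - z₀‖ = ‖(w - z₀) + t • v‖ := by ring_nf
        _ ≤ ‖w - z₀‖ + ‖t • v‖ := norm_add_le _ _
    have h2 : ‖t • v‖ ≤ ε := by
      rw [norm_smul]
      have : ‖t‖ ≤ R := by rwa [dist_zero_right] at ht
      calc ‖t‖ * ‖v‖ ≤ R * ‖v‖ := by gcongr
        _ = ε := by rw [hRdef]; field_simp
    linarith
  have hinU : ∀ t : ℂ, t ∈ Metric.closedBall (0 : ℂ) R → w + t • v ∈ U := fun t ht => hB (hmem t ht)
  set g : ℂ → ℂ := fun t => f (w + t • v) with hgdef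
  have hg : DifferentiableOn ℂ g (Metric.closedBall 0 R) := by
    intro t ht
    have h1 : DifferentiableAt ℂ f (w + t • v) := hf.differentiableAt (hU.mem_nhds (hinU t ht))
    exact (h1.comp t ((differentiableAt_id.smul_const v).const_add w)).differentiableWithinAt
  have hdc : DiffContOnCl ℂ g (Metric.ball 0 R) :=
    (hg.mono Metric.closure_ball_subset_closedBall).diffContOnCl
  have hder : HasDerivAt g (fderiv ℂ f w v) 0 := by
    have h1 : DifferentiableAt ℂ f w :=
      hf.differentiableAt (hU.mem_nhds (hB (by
        rw [Metric.mem_closedBall] at hw ⊢; linarith)))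
    exact hasDerivAt_line h1
  have hbd : ∀ t ∈ Metric.sphere (0 : ℂ) R, ‖g t‖ ≤ M := fun t ht =>
    hM _ (hmem t (Metric.sphere_subset_closedBall ht))
  have hfin := Complex.norm_deriv_le_of_forall_mem_sphere_norm_le hR hdc hbd
  rw [hder.deriv] at hfin
  calc ‖fderiv ℂ f w v‖ ≤ M / R := hfin
    _ = M * ‖v‖ / ε := by rw [hRdef]; field_simp
    _ ≤ 2 * M / ε * ‖v‖ := by rw [div_mul_eq_mul_div]; gcongr; nlinarith

open MeasureTheory in
theorem diff_fderiv_apply {f : (Fin n → ℂ) → ℂ} {U : Set (Fin n → ℂ)} (hU : IsOpen U)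
    (hf : DifferentiableOn ℂ f U) (u : Fin n → ℂ) :
    DifferentiableOn ℂ (fun w => fderiv ℂ f w u) U := by
  intro z₀ hz₀
  suffices h : DifferentiableAt ℂ (fun w => fderiv ℂ f w u) z₀ from h.differentiableWithinAt
  by_cases hu : u = 0
  · subst hu
    have : (fun w => fderiv ℂ f w (0 : Fin n → ℂ)) = fun _ => 0 := by
      funext w; simp
    rw [this]; exact differentiableAt_const 0
  obtain ⟨ε₀, hε₀, hball⟩ := Metric.isOpen_iff.1 hU z₀ hz₀
  set ε : ℝ := ε₀ / 3 with hεdef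
  have hε : 0 < ε := by positivity
  have hB : Metric.closedBall z₀ (2 * ε) ⊆ U := by
    intro p hp
    apply hball
    rw [Metric.mem_closedBall] at hp
    rw [Metric.mem_ball]
    calc dist p z₀ ≤ 2 * ε := hp
      _ < ε₀ := by rw [hεdef]; linarith
  have hun : 0 < ‖u‖ := norm_pos_iff.2 hu
  set r : ℝ := ε / (2 * ‖u‖) with hrdef
  have hr : 0 < r := by positivity
  obtain ⟨M, hM⟩ : ∃ M, ∀ p ∈ Metric.closedBall z₀ (2 * ε), ‖f p‖ ≤ M :=
    (isCompact_closedBall z₀ (2 * ε)).exists_bound_of_continuousOn (hf.continuousOn.mono hB)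
  have hC := norm_fderiv_le hU hf hε hB hM
  set γ : ℝ → ℂ := fun θ => circleMap 0 r θ with hγdef
  have hγnorm : ∀ θ, ‖γ θ‖ = r := fun θ => by
    simp [hγdef, norm_circleMap_zero, abs_of_pos hr]
  have hγne : ∀ θ, γ θ ≠ 0 := fun θ => circleMap_ne_center hr.ne'
  have hpt : ∀ w ∈ Metric.ball z₀ (ε / 2), ∀ θ : ℝ,
      w + γ θ • u ∈ Metric.closedBall z₀ ε := by
    intro w hw θ
    rw [Metric.mem_ball] at hw
    rw [Metric.mem_closedBall]
    have h1 : dist (w + γ θ • u) z₀ ≤ dist w z₀ + ‖γ θ • u‖ := by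
      rw [dist_eq_norm, dist_eq_norm] at *
      calc ‖w + γ θ • u - z₀‖ = ‖(w - z₀) + γ θ • u‖ := by ring_nf
        _ ≤ ‖w - z₀‖ + ‖γ θ • u‖ := norm_add_le _ _
    have h2 : ‖γ θ • u‖ = ε / 2 := by
      rw [norm_smul, hγnorm θ, hrdef]
      field_simp
    linarith
  have hptU : ∀ w ∈ Metric.ball z₀ (ε / 2), ∀ θ : ℝ, w + γ θ • u ∈ U := by
    intro w hw θ
    apply hB
    have := hpt w hw θ
    rw [Metric.mem_closedBall] at this ⊢
    linarith
  set c : ℝ → ℂ := fun θ => deriv (circleMap 0 r) θ * ((γ θ)⁻¹ * (γ θ)⁻¹) with hcdef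
  set Fi : (Fin n → ℂ) → ℝ → ℂ := fun w θ => c θ • f (w + γ θ • u) with hFidef
  set Fi' : (Fin n → ℂ) → ℝ → (Fin n → ℂ) →L[ℂ] ℂ :=
    fun w θ => c θ • fderiv ℂ f (w + γ θ • u) with hFi'def
  set μ : Measure ℝ := volume.restrict (Set.Ioc 0 (2 * Real.pi)) with hμdef
  have hccont : Continuous c := by
    have h1 : Continuous γ := continuous_circleMap 0 r
    have hceq : c = fun θ => γ θ * Complex.I * ((γ θ)⁻¹ * (γ θ)⁻¹) := by
      funext θ; simp only [hcdef, deriv_circleMap]; rfl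
    rw [hceq]
    exact (h1.mul continuous_const).mul ((h1.inv₀ hγne).mul (h1.inv₀ hγne))
  have hcnorm : ∀ θ, ‖c θ‖ = r⁻¹ := by
    intro θ
    rw [hcdef]
    simp only [deriv_circleMap, norm_mul, norm_inv, Complex.norm_I, hγnorm θ,
      norm_circleMap_zero, abs_of_pos hr]
    field_simp
  -- Claim 1 : Cauchy representation of the derivative
  have hrep : ∀ w ∈ Metric.ball z₀ (ε / 2),
      fderiv ℂ f w u = (2 * Real.pi * Complex.I : ℂ)⁻¹ • ∫ θ, Fi w θ ∂μ := by
    intro w hw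
    set g : ℂ → ℂ := fun t => f (w + t • u) with hgdef
    have hg : DifferentiableOn ℂ g (Metric.closedBall 0 r) := by
      intro t ht
      have htm : w + t • u ∈ Metric.closedBall z₀ ε := by
        rw [Metric.mem_ball] at hw
        rw [Metric.mem_closedBall] at ht ⊢
        have h2 : ‖t • u‖ ≤ ε / 2 := by
          rw [norm_smul]
          have h3 : ‖t‖ ≤ r := by simpa [dist_eq_norm] using ht
          calc ‖t‖ * ‖u‖ ≤ r * ‖u‖ := by gcongr
            _ = ε / 2 := by rw [hrdef]; field_simp
        calc dist (w + t • u) z₀ ≤ dist w z₀ + ‖t • u‖ := by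
              rw [dist_eq_norm, dist_eq_norm] at *
              calc ‖w + t • u - z₀‖ = ‖(w - z₀) + t • u‖ := by ring_nf
                _ ≤ ‖w - z₀‖ + ‖t • u‖ := norm_add_le _ _
          _ ≤ ε / 2 + ε / 2 := by linarith
          _ = ε := by ring
      have hUm : w + t • u ∈ U := hB (by rw [Metric.mem_closedBall] at htm ⊢; linarith)
      have h1 : DifferentiableAt ℂ f (w + t • u) := hf.differentiableAt (hU.mem_nhds hUm)
      exact (h1.comp t ((differentiableAt_id.smul_const u).const_add w)).differentiableWithinAt
    have hps := (hg.mono (by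
        intro t ht
        simpa using ht : Metric.closedBall (0:ℂ) (⟨r, hr.le⟩ : NNReal) ⊆ Metric.closedBall 0 r)
      ).hasFPowerSeriesOnBall (show (0:NNReal) < ⟨r, hr.le⟩ from hr)
    have hd0 : deriv g 0 = cauchyPowerSeries g 0 r 1 fun _ => 1 := hps.hasFPowerSeriesAt.deriv
    have hwU : w ∈ U := by
      apply hB
      rw [Metric.mem_ball] at hw
      rw [Metric.mem_closedBall]
      linarith
    have hd0' : deriv g 0 = fderiv ℂ f w u := by
      have h1 : DifferentiableAt ℂ f w := hf.differentiableAt (hU.mem_nhds hwU)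
      exact (hasDerivAt_line h1).deriv
    rw [← hd0', hd0, cauchyPowerSeries_apply]
    congr 1
    rw [circleIntegral]
    rw [intervalIntegral.integral_of_le (by positivity : (0:ℝ) ≤ 2 * Real.pi)]
    refine setIntegral_congr_fun measurableSet_Ioc fun θ _ => ?_
    simp only [hFidef, hcdef, hγdef, sub_zero, pow_one, one_div, smul_eq_mul]
    ring
  -- Claim 2 : differentiation under the integral sign
  have hder : HasFDerivAt (fun w => ∫ θ, Fi w θ ∂μ) (∫ θ, Fi' z₀ θ ∂μ) z₀ := by
    have hz₀ball : z₀ ∈ Metric.ball z₀ (ε / 2) := Metric.mem_ball_self (by positivity)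
    have hcont : ∀ w ∈ Metric.ball z₀ (ε / 2), Continuous (Fi w) := by
      intro w hw
      refine hccont.smul ?_
      refine hf.continuousOn.comp_continuous ?_ (hptU w hw)
      exact continuous_const.add ((continuous_circleMap 0 r).smul continuous_const)
    refine hasFDerivAt_integral_of_dominated_of_fderiv_le
      (F' := Fi') (bound := fun _ => r⁻¹ * (2 * M / ε))
      (Metric.ball_mem_nhds z₀ (show (0:ℝ) < ε / 2 by positivity)) ?_ ?_ ?_ ?_ ?_ ?_
    · exact Filter.eventually_of_mem (Metric.ball_mem_nhds z₀ (by positivity))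
        fun w hw => (hcont w hw).aestronglyMeasurable
    · exact (hcont z₀ hz₀ball).integrableOn_Ioc
    · refine (hccont.aestronglyMeasurable.smul ?_)
      refine Measurable.aestronglyMeasurable ?_
      exact (measurable_fderiv ℂ f).comp
        (continuous_const.add ((continuous_circleMap 0 r).smul continuous_const)).measurable
    · refine Filter.Eventually.of_forall fun θ => fun w hw => ?_
      rw [hFi'def]
      calc ‖c θ • fderiv ℂ f (w + γ θ • u)‖ = ‖c θ‖ * ‖fderiv ℂ f (w + γ θ • u)‖ := norm_smul _ _
        _ ≤ r⁻¹ * (2 * M / ε) := by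
            rw [hcnorm θ]
            have h5 : w + γ θ • u ∈ Metric.closedBall z₀ ε := hpt w hw θ
            have := hC _ h5
            gcongr
    · refine (integrableOn_const ?_)
      exact measure_Ioc_lt_top.ne
    · refine Filter.Eventually.of_forall fun θ => fun w hw => ?_
      have hq : DifferentiableAt ℂ f (w + γ θ • u) :=
        hf.differentiableAt (hU.mem_nhds (hptU w hw θ))
      have hinner : HasFDerivAt (fun w' : Fin n → ℂ => w' + γ θ • u)
          (ContinuousLinearMap.id ℂ (Fin n → ℂ)) w := (hasFDerivAt_id w).add_const _
      have h6 := (hq.hasFDerivAt.comp w hinner).const_smul (c θ)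
      exact h6
  have h7 : DifferentiableAt ℂ
      (fun w => (2 * Real.pi * Complex.I : ℂ)⁻¹ • ∫ θ, Fi w θ ∂μ) z₀ :=
    by have := hder.differentiableAt.const_smul (2 * Real.pi * Complex.I : ℂ)⁻¹; exact this
  refine (Filter.EventuallyEq.differentiableAt_iff ?_).2 h7
  exact Filter.eventuallyEq_of_mem (Metric.ball_mem_nhds z₀ (by positivity))
    fun w hw => hrep w hw

theorem diff_conj {F : (Fin n → ℂ) → ℂ} {z : Fin n → ℂ} (hF : DifferentiableAt ℝ F z) :
    DifferentiableAt ℝ (fun w => (starRingEnd ℂ) (F w)) z :=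
  Complex.conjCLE.differentiableAt.comp z hF

theorem diff_normSq {F : (Fin n → ℂ) → ℂ} {z : Fin n → ℂ} (hF : DifferentiableAt ℝ F z) :
    DifferentiableAt ℝ (fun w => Complex.normSq (F w)) z := by
  have : (fun w => Complex.normSq (F w))
      = fun w => (F w).re * (F w).re + (F w).im * (F w).im := by
    funext w; rw [Complex.normSq_apply]
  rw [this]
  have hre : DifferentiableAt ℝ (fun w => (F w).re) z := Complex.reCLM.differentiableAt.comp z hF
  have him : DifferentiableAt ℝ (fun w => (F w).im) z := Complex.imCLM.differentiableAt.comp z hF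
  exact (hre.mul hre).add (him.mul him)

theorem fderiv_component {φ : (Fin n → ℂ) → (Fin n → ℂ)} {z : Fin n → ℂ}
    (hφ : DifferentiableAt ℂ φ z) (b : Fin n) (v : Fin n → ℂ) :
    fderiv ℂ (fun w => φ w b) z v = (fderiv ℂ φ z v) b := by
  have h1 : HasFDerivAt (fun w => φ w b)
      ((ContinuousLinearMap.proj b : (Fin n → ℂ) →L[ℂ] ℂ).comp (fderiv ℂ φ z)) z :=
    (ContinuousLinearMap.proj b : (Fin n → ℂ) →L[ℂ] ℂ).hasFDerivAt.comp z hφ.hasFDerivAt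
  rw [h1.fderiv]
  rfl

theorem diff_component {φ : (Fin n → ℂ) → (Fin n → ℂ)} {z : Fin n → ℂ}
    (hφ : DifferentiableAt ℂ φ z) (b : Fin n) :
    DifferentiableAt ℂ (fun w => φ w b) z :=
  (ContinuousLinearMap.proj b : (Fin n → ℂ) →L[ℂ] ℂ).differentiableAt.comp z hφ

theorem diffAt_det {N : ℕ} {A : (Fin n → ℂ) → Matrix (Fin N) (Fin N) ℂ} {z : Fin n → ℂ}
    (hA : ∀ p q, DifferentiableAt ℂ (fun w => A w p q) z) :
    DifferentiableAt ℂ (fun w => (A w).det) z := by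
  have h : (fun w => (A w).det)
      = fun w => ∑ σ : Equiv.Perm (Fin N), ((Equiv.Perm.sign σ : ℤ) : ℂ) * ∏ p, A w (σ p) p := by
    funext w
    rw [Matrix.det_apply]
    congr 1
    funext σ
    rw [Units.smul_def, zsmul_eq_mul]
  rw [h]
  refine DifferentiableAt.fun_sum fun σ _ => ?_
  have hp := HasFDerivAt.finset_prod (u := Finset.univ)
    (fun p _ => (hA (σ p) p).hasFDerivAt)
  exact hp.differentiableAt.const_mul _

/-- differentiability of `w ↦ ∂̄ⱼ log k (w)` for smooth positive `k`. -/
theorem DbarL_diff {k : (Fin n → ℂ) → ℝ} {Ω : Set (Fin n → ℂ)} (hΩ : IsOpen Ω)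
    (hk_pos : ∀ z ∈ Ω, 0 < k z) (hk_smooth : ContDiffOn ℝ (⊤ : ℕ∞) k Ω) {z : Fin n → ℂ} (hz : z ∈ Ω)
    (j : Fin n) :
    DifferentiableAt ℝ (fun w => wirtingerDBar (fun u => (Real.log (k u) : ℂ)) w j) z := by
  have hk : ContDiffAt ℝ (⊤ : ℕ∞) k z := hk_smooth.contDiffAt (hΩ.mem_nhds hz)
  have hlog : ContDiffAt ℝ (⊤ : ℕ∞) (fun u => Real.log (k u)) z := hk.log (ne_of_gt (hk_pos z hz))
  have hL : ContDiffAt ℝ (⊤ : ℕ∞) (fun u => (Real.log (k u) : ℂ)) z :=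
    Complex.ofRealCLM.contDiff.comp_contDiffAt z hlog
  have h1 : DifferentiableAt ℝ (fun w => fderiv ℝ (fun u => (Real.log (k u) : ℂ)) w) z :=
    (hL.fderiv_right (m := 1) ((by exact WithTop.coe_le_coe.2 le_top))).differentiableAt one_ne_zero
  unfold wirtingerDBar
  exact ((h1.clm_apply (differentiableAt_const _)).add
    ((h1.clm_apply (differentiableAt_const _)).const_mul Complex.I)).const_mul _

theorem L_diff {k : (Fin n → ℂ) → ℝ} {Ω : Set (Fin n → ℂ)} (hΩ : IsOpen Ω)
    (hk_pos : ∀ z ∈ Ω, 0 < k z) (hk_smooth : ContDiffOn ℝ (⊤ : ℕ∞) k Ω) {z : Fin n → ℂ} (hz : z ∈ Ω) :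
    DifferentiableAt ℝ (fun u => (Real.log (k u) : ℂ)) z := by
  have hk : ContDiffAt ℝ (⊤ : ℕ∞) k z := hk_smooth.contDiffAt (hΩ.mem_nhds hz)
  have hlog : ContDiffAt ℝ (⊤ : ℕ∞) (fun u => Real.log (k u)) z := hk.log (ne_of_gt (hk_pos z hz))
  exact (Complex.ofRealCLM.contDiff.comp_contDiffAt z hlog).differentiableAt (by simp)

theorem ricci_transform {k : (Fin n → ℂ) → ℝ} {Ω : Set (Fin n → ℂ)} (hΩ : IsOpen Ω)
    (hk_pos : ∀ z ∈ Ω, 0 < k z) (hk_smooth : ContDiffOn ℝ (⊤ : ℕ∞) k Ω)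
    {φ : (Fin n → ℂ) → (Fin n → ℂ)} (hmapsφ : Set.MapsTo φ Ω Ω)
    (hholφ : DifferentiableOn ℂ φ Ω)
    (hinvφ : ∀ z ∈ Ω, k (φ z) * ‖holJacDet φ z‖ ^ 2 = k z)
    {z : Fin n → ℂ} (hz : z ∈ Ω) (i j : Fin n) :
    ricciOfDensity k z i j
      = ∑ b, (starRingEnd ℂ) ((fderiv ℂ φ z (Pi.single j 1)) b)
          * ∑ a, (fderiv ℂ φ z (Pi.single i 1)) a * ricciOfDensity k (φ z) a b := by
  classical
  unfold ricciOfDensity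
  set L : (Fin n → ℂ) → ℂ := fun u => (Real.log (k u) : ℂ) with hLdef
  have hφd : ∀ w ∈ Ω, DifferentiableAt ℂ φ w := fun w hw =>
    hholφ.differentiableAt (hΩ.mem_nhds hw)
  have hφz : DifferentiableAt ℂ φ z := hφd z hz
  have hφzΩ : φ z ∈ Ω := hmapsφ hz
  have hLd : ∀ w ∈ Ω, DifferentiableAt ℝ L w := fun w hw => L_diff hΩ hk_pos hk_smooth hw
  have hGd : ∀ (b : Fin n), ∀ w ∈ Ω, DifferentiableAt ℝ (fun w' => wirtingerDBar L w' b) w :=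
    fun b w hw => DbarL_diff hΩ hk_pos hk_smooth hw b
  set ψ : Fin n → Fin n → (Fin n → ℂ) → ℂ :=
    fun b i' w => fderiv ℂ (fun w' => φ w' b) w (Pi.single i' 1) with hψdef
  have hφcompOn : ∀ b : Fin n, DifferentiableOn ℂ (fun w => φ w b) Ω := fun b w hw =>
    (diff_component (hφd w hw) b).differentiableWithinAt
  have hψd : ∀ b i', ∀ w ∈ Ω, DifferentiableAt ℂ (ψ b i') w := fun b i' w hw =>
    (diff_fderiv_apply hΩ (hφcompOn b) _).differentiableAt (hΩ.mem_nhds hw)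
  set JdC : (Fin n → ℂ) → ℂ := fun w => Matrix.det (Matrix.of fun b i' => ψ b i' w) with hJdCdef
  have hJd_eq : ∀ w ∈ Ω, holJacDet φ w = JdC w := by
    intro w hw
    unfold holJacDet
    congr 1
    funext b i'
    simp only [Matrix.of_apply]
    exact wD_of_holo (diff_component (hφd w hw) b) i'
  have hJdC_diffOn : DifferentiableOn ℂ JdC Ω := fun w hw =>
    (diffAt_det (A := fun w => Matrix.of fun b i' => ψ b i' w)
      (fun p q => hψd p q w hw)).differentiableWithinAt
  have hJdC_d : ∀ w ∈ Ω, DifferentiableAt ℂ JdC w := fun w hw =>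
    hJdC_diffOn.differentiableAt (hΩ.mem_nhds hw)
  have hkne : ∀ w ∈ Ω, k w ≠ 0 := fun w hw => (hk_pos w hw).ne'
  have hJdne : ∀ w ∈ Ω, JdC w ≠ 0 := by
    intro w hw h0
    have h1 := hinvφ w hw
    rw [hJd_eq w hw, h0] at h1
    simp only [map_zero, norm_zero, ne_eq, OfNat.ofNat_ne_zero, not_false_eq_true, zero_pow,
      mul_zero] at h1
    exact hkne w hw h1.symm
  have hnormSq : ∀ w ∈ Ω, k (φ w) * Complex.normSq (JdC w) = k w := by
    intro w hw
    have h1 := hinvφ w hw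
    rw [hJd_eq w hw, Complex.sq_norm] at h1
    exact h1
  have hnormSq_pos : ∀ w ∈ Ω, 0 < Complex.normSq (JdC w) := fun w hw =>
    Complex.normSq_pos.2 (hJdne w hw)
  set R : (Fin n → ℂ) → ℂ := fun w => L w - L (φ w) with hRdef
  have hRd : ∀ w ∈ Ω, DifferentiableAt ℝ R w := fun w hw =>
    (hLd w hw).sub ((hLd (φ w) (hmapsφ hw)).comp w ((hφd w hw).restrictScalars ℝ))
  have hReqΩ : ∀ w ∈ Ω, R w = (Real.log (Complex.normSq (JdC w)) : ℂ) := by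
    intro w hw
    have h2 : Real.log (k w) = Real.log (k (φ w)) + Real.log (Complex.normSq (JdC w)) := by
      rw [← hnormSq w hw, Real.log_mul (hkne _ (hmapsφ hw)) (hnormSq_pos w hw).ne']
    show L w - L (φ w) = _
    rw [hLdef]
    simp only []
    rw [h2]
    push_cast
    ring
  set DR : (Fin n → ℂ) → ℂ := fun w => wirtingerDBar R w j with hDRdef
  set HQ : (Fin n → ℂ) → ℂ := fun w => fderiv ℂ JdC w (Pi.single j 1) * (JdC w)⁻¹ with hHQdef
  have hHQd : DifferentiableAt ℂ HQ z :=
    ((diff_fderiv_apply hΩ hJdC_diffOn _).differentiableAt (hΩ.mem_nhds hz)).mul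
      ((hJdC_d z hz).inv (hJdne z hz))
  have hDR_eq : ∀ w ∈ Ω, DR w = (starRingEnd ℂ) (HQ w) := by
    intro w hw
    show wirtingerDBar R w j = _
    have e1 : R =ᶠ[nhds w] fun w' => (Real.log (Complex.normSq (JdC w')) : ℂ) :=
      Filter.eventuallyEq_of_mem (hΩ.mem_nhds hw) fun w' hw' => hReqΩ w' hw'
    rw [wDBar_congr e1 j]
    have hJdr : DifferentiableAt ℝ JdC w := (hJdC_d w hw).restrictScalars ℝ
    have hu : DifferentiableAt ℝ (fun w' => Complex.normSq (JdC w')) w := diff_normSq hJdr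
    rw [wDBar_log hu (hnormSq_pos w hw).ne' j]
    have e2 : (fun w' => ((Complex.normSq (JdC w') : ℝ) : ℂ))
        = fun w' => JdC w' * (starRingEnd ℂ) (JdC w') := by
      funext w'; rw [Complex.mul_conj]
    rw [e2, wDBar_mul hJdr (diff_conj hJdr) j, wDBar_of_holo (hJdC_d w hw) j,
      wDBar_conj hJdr j, wD_of_holo (hJdC_d w hw) j]
    have e3 : ((Complex.normSq (JdC w) : ℝ) : ℂ) = JdC w * (starRingEnd ℂ) (JdC w) :=
      (Complex.mul_conj _).symm
    rw [e3, hHQdef]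
    simp only [map_mul, map_inv₀, zero_mul, zero_add]
    have hne1 : JdC w ≠ 0 := hJdne w hw
    have hne2 : (starRingEnd ℂ) (JdC w) ≠ 0 := by
      simpa using hne1
    field_simp
  -- Step A : decomposition of ∂̄ⱼ log k on Ω
  have hStepA : ∀ w ∈ Ω, wirtingerDBar L w j
      = (∑ b, (starRingEnd ℂ) (ψ b j w) * wirtingerDBar L (φ w) b) + DR w := by
    intro w hw
    have hsplit : L = fun w' => L (φ w') + R w' := by
      funext w'
      show L w' = L (φ w') + (L w' - L (φ w'))
      ring
    have hcomp : DifferentiableAt ℝ (fun w' => L (φ w')) w :=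
      (hLd (φ w) (hmapsφ hw)).comp w ((hφd w hw).restrictScalars ℝ)
    calc wirtingerDBar L w j = wirtingerDBar (fun w' => L (φ w') + R w') w j := by
          conv_lhs => rw [hsplit]
      _ = wirtingerDBar (fun w' => L (φ w')) w j + wirtingerDBar R w j :=
          wDBar_add hcomp (hRd w hw) j
      _ = (∑ b, (starRingEnd ℂ) ((fderiv ℂ φ w (Pi.single j 1)) b) * wirtingerDBar L (φ w) b)
            + DR w := by rw [wDBar_comp (hLd (φ w) (hmapsφ hw)) (hφd w hw) j]
      _ = (∑ b, (starRingEnd ℂ) (ψ b j w) * wirtingerDBar L (φ w) b) + DR w := by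
          refine congrArg (· + DR w) (Finset.sum_congr rfl fun b _ => ?_)
          rw [show ψ b j w = (fderiv ℂ φ w (Pi.single j 1)) b from fderiv_component (hφd w hw) b _]
  -- differentiability of the pieces at z
  have hterm_d : ∀ b : Fin n,
      DifferentiableAt ℝ (fun w => (starRingEnd ℂ) (ψ b j w) * wirtingerDBar L (φ w) b) z :=
    fun b => (diff_conj ((hψd b j z hz).restrictScalars ℝ)).mul
      ((hGd b _ hφzΩ).comp z (hφz.restrictScalars ℝ))
  have hsum_d : DifferentiableAt ℝ
      (fun w => ∑ b, (starRingEnd ℂ) (ψ b j w) * wirtingerDBar L (φ w) b) z :=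
    DifferentiableAt.fun_sum fun b _ => hterm_d b
  have eDR : DR =ᶠ[nhds z] fun w => (starRingEnd ℂ) (HQ w) :=
    Filter.eventuallyEq_of_mem (hΩ.mem_nhds hz) fun w hw => hDR_eq w hw
  have hDR_d : DifferentiableAt ℝ DR z :=
    (Filter.EventuallyEq.differentiableAt_iff eDR).2 (diff_conj (hHQd.restrictScalars ℝ))
  -- Step B : differentiate
  have hkey : wirtingerD (fun w => wirtingerDBar L w j) z i
      = wirtingerD (fun w =>
          (∑ b, (starRingEnd ℂ) (ψ b j w) * wirtingerDBar L (φ w) b) + DR w) z i :=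
    wD_congr (Filter.eventuallyEq_of_mem (hΩ.mem_nhds hz) fun w hw => hStepA w hw) i
  rw [hkey, wD_add hsum_d hDR_d i]
  have hDR0 : wirtingerD DR z i = 0 := by
    rw [wD_congr eDR i, wD_conj (hHQd.restrictScalars ℝ) i, wDBar_of_holo hHQd i, map_zero]
  rw [hDR0, add_zero, wD_sum Finset.univ _ (fun b _ => hterm_d b) i]
  refine Finset.sum_congr rfl fun b _ => ?_
  have hcompG : DifferentiableAt ℝ (fun w => wirtingerDBar L (φ w) b) z :=
    (hGd b _ hφzΩ).comp z (hφz.restrictScalars ℝ)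
  rw [wD_mul (diff_conj ((hψd b j z hz).restrictScalars ℝ)) hcompG i]
  rw [wD_conj ((hψd b j z hz).restrictScalars ℝ) i, wDBar_of_holo (hψd b j z hz) i, map_zero,
    zero_mul, zero_add]
  rw [wD_comp (hGd b _ hφzΩ) hφz i]
  rw [show ψ b j z = (fderiv ℂ φ z (Pi.single j 1)) b from fderiv_component hφz b _]

theorem ricci_conj {k : (Fin n → ℂ) → ℝ} {Ω : Set (Fin n → ℂ)} (hΩ : IsOpen Ω)
    (hk_pos : ∀ z ∈ Ω, 0 < k z) (hk_smooth : ContDiffOn ℝ (⊤ : ℕ∞) k Ω) {z : Fin n → ℂ}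
    (hz : z ∈ Ω) (i j : Fin n) :
    (starRingEnd ℂ) (ricciOfDensity k z i j) = ricciOfDensity k z j i := by
  unfold ricciOfDensity
  set L : (Fin n → ℂ) → ℂ := fun u => (Real.log (k u) : ℂ) with hLdef
  have hkC : ContDiffAt ℝ (⊤ : ℕ∞) k z := hk_smooth.contDiffAt (hΩ.mem_nhds hz)
  have hℓC : ContDiffAt ℝ (⊤ : ℕ∞) (fun u => Real.log (k u)) z := hkC.log (hk_pos z hz).ne'
  have hLC : ContDiffAt ℝ (⊤ : ℕ∞) L z := Complex.ofRealCLM.contDiff.comp_contDiffAt z hℓC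
  have hsym : IsSymmSndFDerivAt ℝ L z := hLC.isSymmSndFDerivAt (by rw [minSmoothness_of_isRCLikeNormedField]; exact WithTop.coe_le_coe.2 (le_top : (2:ℕ∞) ≤ ⊤))
  have hD1d : DifferentiableAt ℝ (fderiv ℝ L) z :=
    (hLC.fderiv_right (m := 1) (by exact WithTop.coe_le_coe.2 le_top)).differentiableAt one_ne_zero
  set B := fderiv ℝ (fderiv ℝ L) z with hBdef
  have happ : ∀ v : Fin n → ℂ,
      fderiv ℝ (fun w => fderiv ℝ L w v) z = B.flip v := by
    intro v
    rw [fderiv_clm_apply hD1d (differentiableAt_const v)]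
    ext u
    simp [hBdef]
  -- realness of B
  have hℓd : ∀ w ∈ Ω, DifferentiableAt ℝ (fun u => Real.log (k u)) w := fun w hw =>
    (((hk_smooth.contDiffAt (hΩ.mem_nhds hw)).log (hk_pos w hw).ne')).differentiableAt (by simp)
  have hgd : DifferentiableAt ℝ (fun w => fderiv ℝ (fun u => Real.log (k u)) w) z :=
    (hℓC.fderiv_right (m := 1) (by exact WithTop.coe_le_coe.2 le_top)).differentiableAt one_ne_zero
  have hreal : ∀ u v : Fin n → ℂ, (starRingEnd ℂ) (B u v) = B u v := by
    intro u v
    have hfdeq : ∀ w ∈ Ω, fderiv ℝ L w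
        = Complex.ofRealCLM.comp (fderiv ℝ (fun u => Real.log (k u)) w) := fun w hw =>
      (Complex.ofRealCLM.hasFDerivAt.comp w (hℓd w hw).hasFDerivAt).fderiv
    have he : (fun w => fderiv ℝ L w v)
        =ᶠ[nhds z] fun w => ((fderiv ℝ (fun u => Real.log (k u)) w v : ℝ) : ℂ) :=
      Filter.eventuallyEq_of_mem (hΩ.mem_nhds hz) fun w hw => by rw [hfdeq w hw]; rfl
    have hgdv : DifferentiableAt ℝ (fun w => fderiv ℝ (fun u => Real.log (k u)) w v) z :=
      hgd.clm_apply (differentiableAt_const v)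
    have h3 : B u v = ((fderiv ℝ (fun w => fderiv ℝ (fun u => Real.log (k u)) w v) z u : ℝ) : ℂ) := by
      have h1 : B u v = (B.flip v) u := rfl
      rw [h1, ← happ v, he.fderiv_eq]
      have h2 : fderiv ℝ (fun w => ((fderiv ℝ (fun u => Real.log (k u)) w v : ℝ) : ℂ)) z
          = Complex.ofRealCLM.comp
              (fderiv ℝ (fun w => fderiv ℝ (fun u => Real.log (k u)) w v) z) :=
        (Complex.ofRealCLM.hasFDerivAt.comp z hgdv.hasFDerivAt).fderiv
      rw [h2]
      rfl
    rw [h3]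
    exact Complex.conj_ofReal _
  -- derivative of ∂̄ functions
  have hF : ∀ (j' : Fin n) (u : Fin n → ℂ),
      fderiv ℝ (fun w => wirtingerDBar L w j') z u
        = (1/2) * (B u (Pi.single j' 1) + Complex.I * B u (Pi.single j' Complex.I)) := by
    intro j' u
    have d1 : DifferentiableAt ℝ (fun w => fderiv ℝ L w (Pi.single j' 1)) z :=
      hD1d.clm_apply (differentiableAt_const _)
    have d2 : DifferentiableAt ℝ (fun w => fderiv ℝ L w (Pi.single j' Complex.I)) z :=
      hD1d.clm_apply (differentiableAt_const _)
    unfold wirtingerDBar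
    rw [fderiv_const_mul (a := fun w => fderiv ℝ L w (Pi.single j' 1)
        + Complex.I * fderiv ℝ L w (Pi.single j' Complex.I)) (d1.add (d2.const_mul Complex.I)),
      fderiv_fun_add d1 (d2.const_mul Complex.I),
      fderiv_const_mul d2 Complex.I]
    simp only [ContinuousLinearMap.smul_apply, ContinuousLinearMap.add_apply, smul_eq_mul]
    rw [happ (Pi.single j' 1), happ (Pi.single j' Complex.I)]
    rfl
  -- final: compute both wirtinger derivatives
  unfold wirtingerD
  rw [hF j (Pi.single i 1), hF j (Pi.single i Complex.I),
    hF i (Pi.single j 1), hF i (Pi.single j Complex.I)]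
  simp only [map_mul, map_add, map_sub, map_div₀, map_one, map_ofNat, Complex.conj_I, hreal]
  rw [hsym.eq (Pi.single i 1) (Pi.single j 1), hsym.eq (Pi.single i 1) (Pi.single j Complex.I),
    hsym.eq (Pi.single i Complex.I) (Pi.single j 1),
    hsym.eq (Pi.single i Complex.I) (Pi.single j Complex.I)]
  ring

theorem ricci_det_rel {k : (Fin n → ℂ) → ℝ} {Ω : Set (Fin n → ℂ)} (hΩ : IsOpen Ω)
    (hk_pos : ∀ z ∈ Ω, 0 < k z) (hk_smooth : ContDiffOn ℝ (⊤ : ℕ∞) k Ω)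
    {φ : (Fin n → ℂ) → (Fin n → ℂ)} (hmapsφ : Set.MapsTo φ Ω Ω)
    (hholφ : DifferentiableOn ℂ φ Ω)
    (hinvφ : ∀ z ∈ Ω, k (φ z) * ‖holJacDet φ z‖ ^ 2 = k z)
    {z : Fin n → ℂ} (hz : z ∈ Ω) :
    (Matrix.of fun i j => ricciOfDensity k z i j).det
      = (Matrix.of fun a b => ricciOfDensity k (φ z) a b).det
        * ((Complex.normSq (holJacDet φ z) : ℝ) : ℂ) := by
  classical
  have hφz : DifferentiableAt ℂ φ z := hholφ.differentiableAt (hΩ.mem_nhds hz)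
  have hmat : (Matrix.of fun i j => ricciOfDensity k z i j)
      = (Matrix.of fun b i' => (fderiv ℂ φ z (Pi.single i' 1)) b).transpose
        * (Matrix.of fun a b => ricciOfDensity k (φ z) a b)
        * (Matrix.of fun b i' => (fderiv ℂ φ z (Pi.single i' 1)) b).map (starRingEnd ℂ) := by
    ext i j
    rw [Matrix.of_apply, ricci_transform hΩ hk_pos hk_smooth hmapsφ hholφ hinvφ hz i j]
    simp only [Matrix.mul_apply, Matrix.transpose_apply, Matrix.map_apply, Matrix.of_apply]
    refine Finset.sum_congr rfl fun b _ => ?_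
    rw [mul_comm]
  rw [hmat, Matrix.det_mul, Matrix.det_mul, Matrix.det_transpose]
  have hdetmap : ((Matrix.of fun b i' => (fderiv ℂ φ z (Pi.single i' 1)) b).map
        (starRingEnd ℂ)).det
      = (starRingEnd ℂ) (Matrix.of fun b i' => (fderiv ℂ φ z (Pi.single i' 1)) b).det :=
    ((starRingEnd ℂ).map_det _).symm
  rw [hdetmap]
  have hJd : holJacDet φ z = (Matrix.of fun b i' => (fderiv ℂ φ z (Pi.single i' 1)) b).det := by
    unfold holJacDet
    congr 1
    funext b i'
    simp only [Matrix.of_apply]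
    rw [wD_of_holo (diff_component hφz b) i', fderiv_component hφz b]
  rw [← hJd, ← Complex.mul_conj]
  ring

end Stmt10Aux

open Stmt10Aux in
/-- Let `M = Ω ⊆ ℂⁿ` be a connected complex manifold on which a group `𝒢` of
biholomorphisms acts transitively, and let `μ` be a `𝒢`-invariant volume element with
smooth positive density `k` (invariance: `k(φz)·|det Jac_ℂ φ(z)|² = k(z)`), such that
`g = Ric(μ)` is positive definite (hence a Hermitian/Riemannian metric).  Then `g` equals
its own Ricci tensor, i.e. `Ric(vol(g)) = g` where `vol(g)` has density `det(gᵢⱼ̄)`: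
`g` is an Einstein metric with Einstein constant `1`. -/
theorem stmt_10 {n : ℕ} (Ω : Set (Fin n → ℂ)) (hΩ : IsOpen Ω) (hconn : IsConnected Ω)
    (𝒢 : Set ((Fin n → ℂ) → (Fin n → ℂ)))
    (hmaps : ∀ φ ∈ 𝒢, Set.MapsTo φ Ω Ω)
    (hhol : ∀ φ ∈ 𝒢, DifferentiableOn ℂ φ Ω)
    (hgrp_id : id ∈ 𝒢)
    (hgrp_comp : ∀ φ ∈ 𝒢, ∀ ψ ∈ 𝒢, (φ ∘ ψ) ∈ 𝒢)
    (hgrp_inv : ∀ φ ∈ 𝒢, ∃ ψ ∈ 𝒢, ∀ z ∈ Ω, ψ (φ z) = z)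
    (htrans : ∀ z ∈ Ω, ∀ w ∈ Ω, ∃ φ ∈ 𝒢, φ z = w)
    (k : (Fin n → ℂ) → ℝ) (hk_pos : ∀ z ∈ Ω, 0 < k z)
    (hk_smooth : ContDiffOn ℝ (⊤ : ℕ∞) k Ω)
    (hinv : ∀ φ ∈ 𝒢, ∀ z ∈ Ω, k (φ z) * ‖holJacDet φ z‖ ^ 2 = k z)
    (hposdef : ∀ z ∈ Ω, ∀ v : Fin n → ℂ, v ≠ 0 →
      0 < (∑ i, ∑ j, ricciOfDensity k z i j * v i * (starRingEnd ℂ) (v j)).re) :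
    ∀ z ∈ Ω, ∀ i j : Fin n,
      ricciOfDensity (fun w => (Matrix.det (Matrix.of fun i j => ricciOfDensity k w i j)).re)
          z i j
        = ricciOfDensity k z i j := by
  classical
  intro z hz i j
  set K : (Fin n → ℂ) → ℝ :=
    fun w => (Matrix.det (Matrix.of fun i j => ricciOfDensity k w i j)).re with hKdef
  have hkne : ∀ w ∈ Ω, k w ≠ 0 := fun w hw => (hk_pos w hw).ne'
  have hdet_real : ∀ w ∈ Ω,
      ((K w : ℝ) : ℂ) = (Matrix.of fun i j => ricciOfDensity k w i j).det := by
    intro w hw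
    have hH : (Matrix.of fun i j => ricciOfDensity k w i j).map (starRingEnd ℂ)
        = (Matrix.of fun i j => ricciOfDensity k w i j).transpose := by
      ext a b
      simp only [Matrix.map_apply, Matrix.transpose_apply, Matrix.of_apply]
      exact ricci_conj hΩ hk_pos hk_smooth hw a b
    have h1 := (starRingEnd ℂ).map_det (Matrix.of fun i j => ricciOfDensity k w i j)
    rw [RingHom.mapMatrix_apply, hH, Matrix.det_transpose] at h1
    exact Complex.conj_eq_iff_re.1 h1
  have hnormSqk : ∀ φ ∈ 𝒢, ∀ w ∈ Ω,
      k (φ w) * Complex.normSq (holJacDet φ w) = k w := by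
    intro φ hφ w hw
    have h := hinv φ hφ w hw
    rwa [Complex.sq_norm] at h
  have hcross : ∀ φ ∈ 𝒢, ∀ w ∈ Ω,
      K w = K (φ w) * Complex.normSq (holJacDet φ w) := by
    intro φ hφ w hw
    have hd := ricci_det_rel hΩ hk_pos hk_smooth (hmaps φ hφ) (hhol φ hφ) (hinv φ hφ) hw
    have h2 : K w = ((Matrix.of fun a b => ricciOfDensity k (φ w) a b).det
        * ((Complex.normSq (holJacDet φ w) : ℝ) : ℂ)).re := by
      rw [hKdef]
      simp only []
      rw [hd]
    rw [h2, mul_comm, Complex.re_ofReal_mul]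
    ring
  obtain ⟨z₀, hz₀⟩ := hconn.nonempty
  have hKlin : ∀ w ∈ Ω, K w * k z₀ = K z₀ * k w := by
    intro w hw
    obtain ⟨φ1, hφ1, hφ1z⟩ := htrans z₀ hz₀ w hw
    have h1 := hcross φ1 hφ1 z₀ hz₀
    have h2 := hnormSqk φ1 hφ1 z₀ hz₀
    rw [hφ1z] at h1 h2
    rw [h1, ← h2]
    ring
  have hdetne : (Matrix.of fun i j => ricciOfDensity k z₀ i j).det ≠ 0 := by
    intro h0
    have h1 : ((Matrix.of fun i j => ricciOfDensity k z₀ i j).transpose).det = 0 := by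
      rw [Matrix.det_transpose]; exact h0
    obtain ⟨v, hv0, hv⟩ := (Matrix.exists_mulVec_eq_zero_iff).mpr h1
    have h2 := hposdef z₀ hz₀ v hv0
    have h3 : (∑ i, ∑ j, ricciOfDensity k z₀ i j * v i * (starRingEnd ℂ) (v j)) = 0 := by
      rw [Finset.sum_comm]
      have h4 : ∀ j' : Fin n,
          (∑ i', ricciOfDensity k z₀ i' j' * v i' * (starRingEnd ℂ) (v j'))
            = ((Matrix.of fun i j => ricciOfDensity k z₀ i j).transpose.mulVec v j')
                * (starRingEnd ℂ) (v j') := by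
        intro j'
        simp only [Matrix.mulVec, dotProduct, Matrix.transpose_apply, Matrix.of_apply,
          Finset.sum_mul]
      rw [Finset.sum_congr rfl fun j' _ => h4 j']
      simp [hv]
    rw [h3] at h2
    simp at h2
  have hKz₀ : K z₀ ≠ 0 := by
    intro h0
    apply hdetne
    have h1 := hdet_real z₀ hz₀
    rw [h0] at h1
    simpa using h1.symm
  have hkz₀ : k z₀ ≠ 0 := hkne z₀ hz₀
  have hc_ne : K z₀ / k z₀ ≠ 0 := div_ne_zero hKz₀ hkz₀
  have hKformula : ∀ w ∈ Ω, K w = (K z₀ / k z₀) * k w := by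
    intro w hw
    field_simp
    linarith [hKlin w hw]
  show ricciOfDensity K z i j = ricciOfDensity k z i j
  unfold ricciOfDensity
  have hinner : ∀ w ∈ Ω, wirtingerDBar (fun u => (Real.log (K u) : ℂ)) w j
      = wirtingerDBar (fun u => (Real.log (k u) : ℂ)) w j := by
    intro w hw
    have e1 : (fun u => (Real.log (K u) : ℂ))
        =ᶠ[nhds w] fun u => ((Real.log (K z₀ / k z₀) : ℝ) : ℂ) + (Real.log (k u) : ℂ) := by
      refine Filter.eventuallyEq_of_mem (hΩ.mem_nhds hw) fun u hu => ?_
      rw [hKformula u hu, Real.log_mul hc_ne (hkne u hu)]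
      push_cast
      ring
    rw [wDBar_congr e1 j, wDBar_const_add]
  have e2 : (fun w => wirtingerDBar (fun u => (Real.log (K u) : ℂ)) w j)
      =ᶠ[nhds z] (fun w => wirtingerDBar (fun u => (Real.log (k u) : ℂ)) w j) :=
    Filter.eventuallyEq_of_mem (hΩ.mem_nhds hz) hinner
  rw [wD_congr e2 i]
end

section
/- Let (M,g) be a Riemannian manifold and let Is(M,g) be its isometry group with the compact-open topology. Then for every m ∈ M, the evaluation map Is(M,g) → M, α ↦ α(m), is a proper map. -/
/-!
A pointwise limit of isometries need not be surjective, so one tracks the inverses too: the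
pairs `(α, α.symm)` are exactly the pairs of maps `(f, g)` with
`dist (f x) y = dist x (g y)`, a condition that is closed for pointwise convergence. The pairs
with `α m ∈ K` take values in closed balls, so Tychonoff gives compactness in the pointwise
topology, and since isometries are equicontinuous, Arzelà–Ascoli upgrades this to the
compact-open topology.
-/

open Metric Set Topology

theorem Isometry.dist_apply_le_dist_add_dist {X : Type*} [PseudoMetricSpace X] {f : X → X}
    (hf : Isometry f) (m x : X) : dist (f x) m ≤ dist x m + dist (f m) m := by
  calc dist (f x) m ≤ dist (f x) (f m) + dist (f m) m := dist_triangle _ _ _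
    _ = dist x m + dist (f m) m := by rw [hf.dist_eq]

namespace IsometryEquiv

variable {X Y : Type*} [MetricSpace X] [MetricSpace Y]

theorem dist_apply_eq_dist_symm_apply (α : X ≃ᵢ Y) (x : X) (y : Y) :
    dist (α x) y = dist x (α.symm y) := by
  rw [← α.dist_eq x (α.symm y), α.apply_symm_apply]

def ofDistEqDist (f : X → Y) (g : Y → X) (h : ∀ x y, dist (f x) y = dist x (g y)) :
    X ≃ᵢ Y where
  toFun := f
  invFun := g
  left_inv x := (dist_eq_zero.1 <| by rw [← h, dist_self]).symm
  right_inv y := dist_eq_zero.1 <| by rw [h, dist_self]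
  isometry_toFun := Isometry.of_dist_eq fun x x' => by
    rw [h, (dist_eq_zero.1 <| by rw [← h, dist_self] : x' = g (f x')).symm]

theorem range_coe_prod_coe_symm :
    range (fun α : X ≃ᵢ Y => ((⇑α, ⇑α.symm) : (X → Y) × (Y → X))) =
      {p | ∀ x y, dist (p.1 x) y = dist x (p.2 y)} := by
  ext p
  refine ⟨?_, fun h => ⟨ofDistEqDist p.1 p.2 h, rfl⟩⟩
  rintro ⟨α, rfl⟩
  exact α.dist_apply_eq_dist_symm_apply

theorem isClosed_range_coe_prod_coe_symm :
    IsClosed (range fun α : X ≃ᵢ Y => ((⇑α, ⇑α.symm) : (X → Y) × (Y → X))) := by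
  rw [range_coe_prod_coe_symm]
  simp only [ofPred_forall]
  exact isClosed_iInter fun x => isClosed_iInter fun y => isClosed_eq
    (((continuous_apply x).comp continuous_fst).dist continuous_const)
    (continuous_const.dist ((continuous_apply y).comp continuous_snd))

variable {M : Type*} [MetricSpace M]

theorem isCompact_image_coe_setOf_apply_mem [ProperSpace M] {K : Set M} (hK : IsCompact K)
    (m : M) : IsCompact ((⇑) '' {α : M ≃ᵢ M | α m ∈ K} : Set (M → M)) := by
  obtain ⟨R, hR⟩ := hK.isBounded.subset_closedBall m
  set pair := fun α : M ≃ᵢ M => ((⇑α, ⇑α.symm) : (M → M) × (M → M))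
  set T := pair '' {α | α m ∈ K}
  set Q : Set (M → M) := univ.pi fun x => closedBall m (dist x m + R)
  have hT_closed : IsClosed T := by
    rw [show T = {p | p.1 m ∈ K} ∩ range pair from
      image_preimage_eq_inter_range (f := pair) (t := {p | p.1 m ∈ K})]
    exact (hK.isClosed.preimage ((continuous_apply m).comp continuous_fst)).inter
      isClosed_range_coe_prod_coe_symm
  have hTQ : T ⊆ Q ×ˢ Q := by
    rintro - ⟨α, hα, rfl⟩
    have hαm : dist (α m) m ≤ R := mem_closedBall.1 (hR hα)
    refine ⟨mem_univ_pi.2 fun x => ?_, mem_univ_pi.2 fun y => ?_⟩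
    · exact mem_closedBall.2 <| (α.isometry.dist_apply_le_dist_add_dist m x).trans (by linarith)
    · refine mem_closedBall.2 <| (α.symm.isometry.dist_apply_le_dist_add_dist m y).trans ?_
      rw [dist_comm (α.symm m), ← α.dist_apply_eq_dist_symm_apply]
      linarith
  have hQ : IsCompact Q := isCompact_univ_pi fun x => isCompact_closedBall _ _
  rw [← image_image Prod.fst pair]
  exact ((hQ.prod hQ).of_isClosed_subset hT_closed hTQ).image continuous_fst

end IsometryEquiv

/-- Let `(M,g)` be a Riemannian manifold (viewed as a proper metric space via its
distance function) and let `Is(M,g)` be its isometry group with the compact-open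
topology.  Then for every `m ∈ M`, the evaluation map `Is(M,g) → M`, `α ↦ α(m)`,
is a proper map. -/
theorem stmt_11 {M : Type*} [MetricSpace M] [ProperSpace M] (m : M) :
    @IsProperMap (M ≃ᵢ M) M
      (TopologicalSpace.induced
        (fun α : M ≃ᵢ M => (⟨⇑α, α.continuous⟩ : C(M, M))) inferInstance)
      _
      (fun α : M ≃ᵢ M => α m) := by
  let _ : TopologicalSpace (M ≃ᵢ M) :=
    TopologicalSpace.induced (fun α : M ≃ᵢ M => (⟨⇑α, α.continuous⟩ : C(M, M))) inferInstance
  have hι : IsInducing fun α : M ≃ᵢ M => (⟨⇑α, α.continuous⟩ : C(M, M)) := ⟨rfl⟩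
  refine isProperMap_iff_isCompact_preimage.2
    ⟨(continuous_eval_const (F := C(M, M)) m).comp hι.continuous, fun K hK => ?_⟩
  refine hι.isCompact_iff.2 ?_
  refine ArzelaAscoli.isCompact_of_equicontinuous _ ?_ ?_
  · rw [image_image]
    exact IsometryEquiv.isCompact_image_coe_setOf_apply_mem hK m
  · exact (LipschitzWith.uniformEquicontinuous _ 1
      fun ⟨_, α, _, rfl⟩ => α.isometry.lipschitz).equicontinuous
end

section
/- Let Γ be a lattice in a semisimple connected real Lie group G = ∏ᵢ Gᵢ (almost direct product of connected normal subgroups), with Γᵢ := Γ ∩ Gᵢ an irreducible lattice in Gᵢ and ∏ Γᵢ of finite index in Γ. Then the commensurability group of Γ in G equals the product of the commensurability groups of the Γᵢ in the Gᵢ: Comm(Γ) = ∏ Comm(Γᵢ). -/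
/-!
A conjugate `gΓg⁻¹` meets the normal factor `Gᵢ` in `g Γᵢ g⁻¹`, so `Comm(Γ) ⊆ Comm(Γᵢ)` for
every `i`. Writing `g = ∏ uᵢ` with `uᵢ ∈ Gᵢ`, the elements `g` and `uᵢ` differ by an element
centralising `Gᵢ`, hence `uᵢ ∈ Comm(Γᵢ)` and `g ∈ ∏ (Comm(Γᵢ) ∩ Gᵢ)`.

Conversely `Γ` is commensurable with `∏ Γⱼ = Γᵢ ⊔ C`, where `C = ∏_{j ≠ i} Γⱼ` centralises `Gᵢ`.
Conjugation by `h ∈ Gᵢ` fixes `C`, and commensurability of `hΓᵢh⁻¹` with `Γᵢ` survives taking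
the join with a subgroup centralising both.
-/

open Pointwise ConjAct

namespace Subgroup

variable {G : Type*} [Group G]

/-- `B ⊔ C` is the image of `B × C` under multiplication, and `A ⊔ C` contains the image of the
finite index subgroup `(A ⊓ B) × C`. -/
theorem relIndex_sup_ne_zero_of_le_centralizer {A B C : Subgroup G} (hB : B ≤ centralizer C)
    (h : A.relIndex B ≠ 0) : (A ⊔ C).relIndex (B ⊔ C) ≠ 0 := by
  let f := B.subtype.noncommCoprod C.subtype fun b c => (hB b.2 c c.2).symm
  let P : Subgroup (B × C) := (A.subgroupOf B).prod ⊤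
  have hrange : P.map f ≤ A ⊔ C := by
    rw [map_le_iff_le_comap]
    rintro ⟨b, c⟩ ⟨hb, -⟩
    show (b : G) * c ∈ A ⊔ C
    exact mul_mem (mem_sup_left hb) (mem_sup_right c.2)
  have htop : (⊤ : Subgroup (B × C)).map f = B ⊔ C := by
    rw [← MonoidHom.range_eq_map]
    exact (MonoidHom.noncommCoprod_range _ _ _).trans (by rw [range_subtype, range_subtype])
  have hP : (P.map f).relIndex (B ⊔ C) ≠ 0 := by
    rw [← htop, relIndex_map_map, top_sup_eq, relIndex_top_right]
    refine ne_zero_of_dvd_ne_zero ?_ (index_dvd_of_le le_sup_left)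
    rwa [index_prod, index_top, mul_one]
  exact fun h0 => hP (relIndex_eq_zero_of_le_left hrange h0)

namespace Commensurable

theorem sup_of_le_centralizer {A B C : Subgroup G} (h : Commensurable A B)
    (hA : A ≤ centralizer C) (hB : B ≤ centralizer C) : Commensurable (A ⊔ C) (B ⊔ C) :=
  ⟨relIndex_sup_ne_zero_of_le_centralizer hB h.1, relIndex_sup_ne_zero_of_le_centralizer hA h.2⟩

theorem inf_right {H K : Subgroup G} (h : Commensurable H K) (N : Subgroup G) :
    Commensurable (H ⊓ N) (K ⊓ N) :=
  ⟨relIndex_inter_ne_zero h.1 N, relIndex_inter_ne_zero h.2 N⟩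

theorem normalizer_le_commensurator (H : Subgroup G) : normalizer (H : Set G) ≤ commensurator H :=
  fun g hg => by
    rw [commensurator_mem_iff, conjAct_pointwise_smul_eq_self hg]

theorem commensurator_le_commensurator_inf (H : Subgroup G) {N : Subgroup G} (hN : N.Normal) :
    commensurator H ≤ commensurator (H ⊓ N) := fun g hg => by
  rw [commensurator_mem_iff, smul_inf, hN.conjAct]
  exact hg.inf_right N

theorem commensurator_inf_le_commensurator_sup {H N C : Subgroup G} (hHN : H ≤ N)
    (hC : C ≤ centralizer N) : commensurator H ⊓ N ≤ commensurator (H ⊔ C) := by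
  rintro h ⟨hH, hN⟩
  have hNC : N ≤ centralizer C := le_centralizer_iff.mp hC
  have hfixC : toConjAct h • C = C :=
    conjAct_pointwise_smul_eq_self (centralizer_le_normalizer _ (hNC hN))
  have hhHN : toConjAct h • H ≤ N :=
    (pointwise_smul_le_pointwise_smul_iff.mpr hHN).trans_eq
      (conjAct_pointwise_smul_eq_self (le_normalizer hN))
  rw [commensurator_mem_iff, smul_sup, hfixC]
  exact ((commensurator_mem_iff H h).mp hH).sup_of_le_centralizer (hhHN.trans hNC)
    (hHN.trans hNC)

end Commensurable

theorem exists_components_of_mem_iSup {ι : Type*} [Fintype ι] {H : ι → Subgroup G}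
    (hcomm : Pairwise fun i j => ∀ x y : G, x ∈ H i → y ∈ H j → Commute x y) {g : G}
    (hg : g ∈ ⨆ i, H i) :
    ∃ u : ∀ i, H i, g ∈ closure (Set.range fun i => (u i : G)) ∧
      ∀ i, g * (u i : G)⁻¹ ∈ centralizer (H i) := by
  classical
  rw [← noncommPiCoprod_range (hcomm := hcomm)] at hg
  obtain ⟨u, rfl⟩ := hg
  refine ⟨u, ?_, fun i => ?_⟩
  · rw [noncommPiCoprod_apply]
    exact noncommProd_mem _ _ fun i _ => subset_closure ⟨i, rfl⟩
  · rw [noncommPiCoprod_apply, ← Finset.noncommProd_erase_mul _ (Finset.mem_univ i) _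
      fun a _ b _ h => hcomm h _ _ (u a).2 (u b).2, mul_inv_cancel_right]
    refine noncommProd_mem _ _ fun j hj x hx => ?_
    exact (hcomm (Finset.ne_of_mem_erase hj).symm x (u j) hx (u j).2).eq

end Subgroup

open Subgroup Subgroup.Commensurable

theorem stmt_13_general {G : Type*} [Group G]
    {ι : Type*} [Fintype ι]
    (Gi : ι → Subgroup G) (hnorm : ∀ i, (Gi i).Normal)
    (hcomm : ∀ i j, i ≠ j → ∀ x ∈ Gi i, ∀ y ∈ Gi j, Commute x y)
    (htop : (⨆ i, Gi i) = ⊤)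
    (Γ : Subgroup G)
    (hfin : ((⨆ i, Γ ⊓ Gi i).subgroupOf Γ).index ≠ 0) :
    Subgroup.Commensurable.commensurator Γ
      = ⨆ i, (Subgroup.Commensurable.commensurator (Γ ⊓ Gi i) ⊓ Gi i) := by
  have hcent : ∀ i j, i ≠ j → Gi j ≤ centralizer (Gi i) :=
    fun i j hij y hy x hx => (hcomm i j hij x hx y hy).eq
  apply le_antisymm
  · intro g hg
    obtain ⟨u, hgu, hu⟩ := exists_components_of_mem_iSup
      (fun i j hij x y hx hy => hcomm i j hij x hx y hy) (htop ▸ mem_top g)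
    refine (closure_le _).mpr ?_ hgu
    rintro _ ⟨i, rfl⟩
    have hc : (g * (u i : G)⁻¹)⁻¹ ∈ commensurator (Γ ⊓ Gi i) :=
      normalizer_le_commensurator _ <| centralizer_le_normalizer _ <|
        centralizer_le inf_le_right (inv_mem (hu i))
    have hgi := commensurator_le_commensurator_inf Γ (hnorm i) hg
    refine mem_iSup_of_mem i ⟨?_, (u i).2⟩
    simpa using mul_mem hc hgi
  · have hΓ' : Commensurable (⨆ i, Γ ⊓ Gi i) Γ :=
      ⟨hfin, by rw [relIndex_eq_one.mpr (iSup_le fun i => inf_le_left)]; exact one_ne_zero⟩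
    rw [← hΓ'.eq]
    refine iSup_le fun i => ?_
    rw [iSup_split_single _ i]
    exact commensurator_inf_le_commensurator_sup inf_le_right <|
      iSup₂_le fun j hji => inf_le_right.trans (hcent i j hji.symm)

/-- Let `Γ` be a lattice in a semisimple connected real Lie group `G = ∏ᵢ Gᵢ`
(an almost direct product of connected normal subgroups: the `Gᵢ` are normal, pairwise
commuting, and generate `G`), with `Γᵢ := Γ ∩ Gᵢ` an irreducible lattice in `Gᵢ` and
`∏ Γᵢ` of finite index in `Γ`.  Then the commensurability group of `Γ` in `G` is the
product of the commensurability groups of the `Γᵢ` in the `Gᵢ`: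
`Comm(Γ) = ∏ Comm(Γᵢ)`. -/
theorem stmt_13 {G : Type*} [Group G] [TopologicalSpace G] [IsTopologicalGroup G]
    {ι : Type*} [Fintype ι]
    (Gi : ι → Subgroup G) (hnorm : ∀ i, (Gi i).Normal)
    (hconn : ∀ i, IsConnected ((Gi i : Set G)))
    (hcomm : ∀ i j, i ≠ j → ∀ x ∈ Gi i, ∀ y ∈ Gi j, Commute x y)
    (htop : (⨆ i, Gi i) = ⊤)
    (Γ : Subgroup G) (hdisc : DiscreteTopology Γ)
    (hfin : ((⨆ i, Γ ⊓ Gi i).subgroupOf Γ).index ≠ 0) :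
    Subgroup.Commensurable.commensurator Γ
      = ⨆ i, (Subgroup.Commensurable.commensurator (Γ ⊓ Gi i) ⊓ Gi i) :=
  stmt_13_general Gi hnorm hcomm htop Γ hfin
end
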